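/- For every real κ with 1 < κ ≤ 2 and every vector w ∈ ℝ⁵ satisfying ⟨w, w⟩ = 1, ⟨w_x, w⟩ = −1, ⟨w_c, w⟩ = −1, ⟨w_f, w⟩ = −1, ⟨w_c*, w⟩ = 1 and ⟨w_z, w⟩ = √(3 + 2√κ − κ), one has ⟨w_t, w⟩ = (2 + 2√κ − κ)/√(4 + κ²), and this value is at least 1; that is, the bridge ball is nested inside (or internally tangent to) the tangency ball b_t, hence contained in the crossing region. -/

import Mathlib

noncomputable section

/-- The Lorentzian product on ℝ⁵: ⟨u,v⟩ = u₁v₁ + u₂v₂ + u₃v₃ + u₄v₄ − u₅v₅. -/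
def lprod5 (u v : Fin 5 → ℝ) : ℝ :=
  u 0 * v 0 + u 1 * v 1 + u 2 * v 2 + u 3 * v 3 - u 4 * v 4

/-- Inversive coordinates of the blow-ups to ℝ³ of the standard pyramidal disk
packing, its mirror and tangency disks, and the half-space `{z ≥ 0}`. -/
def wx : Fin 5 → ℝ := ![0, -1, 0, 1, 1]
def wc (κ : ℝ) : Fin 5 → ℝ := ![0, 1 - κ, 0, -1, κ - 1]
def wf (κ : ℝ) : Fin 5 → ℝ := ![2 / Real.sqrt κ, 0, 0, 2 / κ - 1, 2 / κ]
def wmc : Fin 5 → ℝ := ![0, 1, 0, 1, 1]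
def wmf (κ : ℝ) : Fin 5 → ℝ := ![-(2 / Real.sqrt κ), 0, 0, 2 / κ - 1, 2 / κ]
def wcs (κ : ℝ) : Fin 5 → ℝ :=
  ![0, -(Real.sqrt κ / 2), 0, -(1 / Real.sqrt κ), (κ - 2) / (2 * Real.sqrt κ)]
def wt (κ : ℝ) : Fin 5 → ℝ :=
  ![0, -(2 / Real.sqrt (κ ^ 2 + 4)), 0, κ / Real.sqrt (κ ^ 2 + 4), 0]
def wz : Fin 5 → ℝ := ![0, 0, 1, 0, 0]

/-!
The three tangency conditions with `b_x`, `b_c` and `b_c*` are linear in `w` and already pin down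
the two coordinates `w₁ = -√κ`, `w₃ = 2/κ - 1` on which `⟨w_t, w⟩` depends. The inequality then
reduces, after squaring, to `(2 + 2√κ - κ)² - (4 + κ²) = 4√κ (2 - κ) ≥ 0`.
-/

section Coordinates

variable (κ : ℝ) (w : Fin 5 → ℝ)

theorem lprod5_wx : lprod5 wx w = -w 1 + w 3 - w 4 := by
  simp only [lprod5, wx, Matrix.cons_val_zero, Matrix.cons_val_one, Matrix.cons_val]
  ring

theorem lprod5_wc : lprod5 (wc κ) w = (1 - κ) * w 1 - w 3 - (κ - 1) * w 4 := by
  simp only [lprod5, wc, Matrix.cons_val_zero, Matrix.cons_val_one, Matrix.cons_val]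
  ring

theorem lprod5_wcs :
    lprod5 (wcs κ) w =
      -(√κ / 2) * w 1 - 1 / √κ * w 3 - (κ - 2) / (2 * √κ) * w 4 := by
  simp only [lprod5, wcs, Matrix.cons_val_zero, Matrix.cons_val_one, Matrix.cons_val]
  ring

theorem lprod5_wt : lprod5 (wt κ) w = (κ * w 3 - 2 * w 1) / √(κ ^ 2 + 4) := by
  simp only [lprod5, wt, Matrix.cons_val_zero, Matrix.cons_val_one, Matrix.cons_val]
  ring

end Coordinates

section TangentBall

variable {κ : ℝ} {w : Fin 5 → ℝ}

theorem mul_coord_three_of_tangent (hx : lprod5 wx w = -1) (hc : lprod5 (wc κ) w = -1) :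
    κ * w 3 = 2 - κ := by
  rw [lprod5_wx] at hx
  rw [lprod5_wc] at hc
  linear_combination (κ - 1) * hx - hc

theorem mul_coord_one_add_four_of_tangent (hx : lprod5 wx w = -1)
    (hc : lprod5 (wc κ) w = -1) : κ * (w 1 + w 4) = 2 := by
  rw [lprod5_wx] at hx
  rw [lprod5_wc] at hc
  linear_combination -hx - hc

theorem coord_one_of_tangent (hκ : 0 < κ) (hx : lprod5 wx w = -1)
    (hc : lprod5 (wc κ) w = -1) (hcs : lprod5 (wcs κ) w = 1) : w 1 = -√κ := by
  have hs : 0 < √κ := Real.sqrt_pos.mpr hκ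
  have hs2 : √κ ^ 2 = κ := Real.sq_sqrt hκ.le
  have h3 := mul_coord_three_of_tangent hx hc
  have h14 := mul_coord_one_add_four_of_tangent hx hc
  rw [lprod5_wcs] at hcs
  field_simp at hcs
  -- `2√κ · ⟨w_c*, w⟩ = -κ w₁ - 2 w₃ - (κ - 2) w₄`, in which `w₃` and `w₄` cancel out
  apply mul_left_cancel₀ hκ.ne'
  linear_combination (-(κ / 2)) * hcs - (κ / 2 * w 1) * hs2 - h3 - ((κ - 2) / 2) * h14

end TangentBall

theorem one_le_bridge_ratio {κ : ℝ} (hκ0 : 0 ≤ κ) (hκ2 : κ ≤ 2) :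
    1 ≤ (2 + 2 * √κ - κ) / √(4 + κ ^ 2) := by
  have hs : 0 ≤ √κ := Real.sqrt_nonneg κ
  have hs2 : √κ ^ 2 = κ := Real.sq_sqrt hκ0
  have hnum : 0 ≤ 2 + 2 * √κ - κ := by linarith
  rw [one_le_div (Real.sqrt_pos.mpr (by positivity)), Real.sqrt_le_left hnum]
  nlinarith [mul_nonneg hs (sub_nonneg.mpr hκ2)]

theorem bridge_ball_in_tangency_ball_general (κ : ℝ) (hκ1 : 1 < κ) (hκ2 : κ ≤ 2)
    (w : Fin 5 → ℝ)
    (hx : lprod5 wx w = -1) (hc : lprod5 (wc κ) w = -1)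
    (hcs : lprod5 (wcs κ) w = 1) :
    lprod5 (wt κ) w = (2 + 2 * Real.sqrt κ - κ) / Real.sqrt (4 + κ ^ 2) ∧
    1 ≤ (2 + 2 * Real.sqrt κ - κ) / Real.sqrt (4 + κ ^ 2) := by
  have hκ : 0 < κ := by linarith
  refine ⟨?_, one_le_bridge_ratio hκ.le hκ2⟩
  rw [lprod5_wt, mul_coord_three_of_tangent hx hc, coord_one_of_tangent hκ hx hc hcs, add_comm _ 4]
  ring

/-- For `1 < κ ≤ 2`, the bridge ball lies inside the tangency ball `b_t`:
`⟨w_t, w⟩ = (2 + 2√κ − κ)/√(4 + κ²) ≥ 1`, hence it is contained in the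
crossing region. -/
theorem bridge_ball_in_tangency_ball (κ : ℝ) (hκ1 : 1 < κ) (hκ2 : κ ≤ 2)
    (w : Fin 5 → ℝ)
    (hww : lprod5 w w = 1) (hx : lprod5 wx w = -1) (hc : lprod5 (wc κ) w = -1)
    (hf : lprod5 (wf κ) w = -1) (hcs : lprod5 (wcs κ) w = 1)
    (hz : lprod5 wz w = Real.sqrt (3 + 2 * Real.sqrt κ - κ)) :
    lprod5 (wt κ) w = (2 + 2 * Real.sqrt κ - κ) / Real.sqrt (4 + κ ^ 2) ∧
    1 ≤ (2 + 2 * Real.sqrt κ - κ) / Real.sqrt (4 + κ ^ 2) :=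
  bridge_ball_in_tangency_ball_general κ hκ1 hκ2 w hx hc hcs
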